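/- Let g be a Λ-tight generalization of s = λx:α.λy:α. f(x) and t = λx:α.λy:α. f(y), let (σ₁,σ₂) ∈ GS_gnd(s,t,g), and let Y be a fresh free variable. Then G_{Λ_sp}(g,Z,Y,σ₁,σ₂) ≤_Λ G_Λ(g,Z,Y,σ₁,σ₂), i.e., the (g,Λ_sp)-pseudo-pattern is less than or equal to the (g,Λ)-pseudo-pattern in the instantiation quasi-order on Λ. -/

import Mathlib

/-!
Anti-unification over the simply-typed lambda calculus (Cerna & Buran).

We fix one base type `α` (`Ty.base`) and a signature that contains, for every
simple type `τ`, constants `Tm.const n τ` (so in particular a constant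
`f : α → α`, namely `fC = Tm.const 0 (α → α)`).  Terms use de Bruijn indices
for bound variables (so `=_α` is definitional) and named, type-annotated free
variables.  Substitutions are type-preserving finite maps from free variables
to (locally closed) terms; since the terms in their range are locally closed,
application of a substitution is automatically capture-avoiding.
-/

namespace AU

inductive Ty : Type where
  | base : Ty
  | arr : Ty → Ty → Ty
deriving DecidableEq

inductive Tm : Type where
  | bvar : ℕ → Tm
  | fvar : ℕ → Ty → Tm
  | const : ℕ → Ty → Tm
  | lam : Ty → Tm → Tm
  | app : Tm → Tm → Tm
deriving DecidableEq

/-- `mkArrow [γ₁,…,γₘ] ρ = γ₁ → ⋯ → γₘ → ρ`. -/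
def mkArrow : List Ty → Ty → Ty
  | [], ρ => ρ
  | τ :: rest, ρ => Ty.arr τ (mkArrow rest ρ)

/-- Shift de Bruijn indices `≥ c` up by `d`. -/
def shift (d : ℕ) : ℕ → Tm → Tm
  | c, Tm.bvar i => if i < c then Tm.bvar i else Tm.bvar (i + d)
  | _, Tm.fvar n τ => Tm.fvar n τ
  | _, Tm.const n τ => Tm.const n τ
  | c, Tm.lam τ t => Tm.lam τ (shift d (c + 1) t)
  | c, Tm.app t u => Tm.app (shift d c t) (shift d c u)

/-- Substitute `u` for the bound variable `k` in `t` (for β-reduction). -/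
def bsubst : Tm → ℕ → Tm → Tm
  | Tm.bvar i, k, u => if i = k then u else if k < i then Tm.bvar (i - 1) else Tm.bvar i
  | Tm.fvar n τ, _, _ => Tm.fvar n τ
  | Tm.const n τ, _, _ => Tm.const n τ
  | Tm.lam τ t, k, u => Tm.lam τ (bsubst t (k + 1) (shift 1 0 u))
  | Tm.app a b, k, u => Tm.app (bsubst a k u) (bsubst b k u)

/-- Simple typing. Free variables and constants carry their type. -/
inductive HasType : List Ty → Tm → Ty → Prop where
  | bvar {Γ i τ} : Γ[i]? = some τ → HasType Γ (Tm.bvar i) τ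
  | fvar {Γ n τ} : HasType Γ (Tm.fvar n τ) τ
  | const {Γ n τ} : HasType Γ (Tm.const n τ) τ
  | lam {Γ τ ρ t} : HasType (τ :: Γ) t ρ → HasType Γ (Tm.lam τ t) (Ty.arr τ ρ)
  | app {Γ t u τ ρ} : HasType Γ t (Ty.arr τ ρ) → HasType Γ u τ → HasType Γ (Tm.app t u) ρ

/-- `=_{αβη}`: equality modulo α (definitional), β and η. -/
inductive AbeEq : Tm → Tm → Prop where
  | refl (t) : AbeEq t t
  | symm {t u} : AbeEq t u → AbeEq u t
  | trans {t u v} : AbeEq t u → AbeEq u v → AbeEq t v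
  | beta (τ t u) : AbeEq (Tm.app (Tm.lam τ t) u) (bsubst t 0 u)
  | eta (τ t) : AbeEq (Tm.lam τ (Tm.app (shift 1 0 t) (Tm.bvar 0))) t
  | lam {τ t u} : AbeEq t u → AbeEq (Tm.lam τ t) (Tm.lam τ u)
  | app {t t' u u'} : AbeEq t t' → AbeEq u u' → AbeEq (Tm.app t u) (Tm.app t' u')

/-- One step of η-reduction (congruent closure). -/
inductive EtaStep : Tm → Tm → Prop where
  | eta (τ t) : EtaStep (Tm.lam τ (Tm.app (shift 1 0 t) (Tm.bvar 0))) t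
  | lam {τ t u} : EtaStep t u → EtaStep (Tm.lam τ t) (Tm.lam τ u)
  | appL {t t' u} : EtaStep t t' → EtaStep (Tm.app t u) (Tm.app t' u)
  | appR {t u u'} : EtaStep u u' → EtaStep (Tm.app t u) (Tm.app t u')

def EtaRed : Tm → Tm → Prop := Relation.ReflTransGen EtaStep
def EtaNormal (t : Tm) : Prop := ∀ u, ¬ EtaStep t u
/-- `IsEtaNF t t'` : `t'` is the η-normal form `t↓_η` of `t`. -/
def IsEtaNF (t t' : Tm) : Prop := EtaRed t t' ∧ EtaNormal t'

inductive BetaStep : Tm → Tm → Prop where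
  | beta (τ t u) : BetaStep (Tm.app (Tm.lam τ t) u) (bsubst t 0 u)
  | lam {τ t u} : BetaStep t u → BetaStep (Tm.lam τ t) (Tm.lam τ u)
  | appL {t t' u} : BetaStep t t' → BetaStep (Tm.app t u) (Tm.app t' u)
  | appR {t u u'} : BetaStep u u' → BetaStep (Tm.app t u) (Tm.app t u')

def BetaEtaStep (t u : Tm) : Prop := BetaStep t u ∨ EtaStep t u
def BetaEtaRed : Tm → Tm → Prop := Relation.ReflTransGen BetaEtaStep
def BetaEtaNormal (t : Tm) : Prop := ∀ u, ¬ BetaEtaStep t u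

/-- The head of a term: `head (λx.t) = λx.`, `head (h(s₁,…,sₘ)) = h`. -/
inductive Head : Type where
  | lam : Ty → Head
  | bvar : ℕ → Head
  | fvar : ℕ → Ty → Head
  | const : ℕ → Ty → Head
deriving DecidableEq

def headOf : Tm → Head
  | Tm.bvar i => Head.bvar i
  | Tm.fvar n τ => Head.fvar n τ
  | Tm.const n τ => Head.const n τ
  | Tm.lam τ _ => Head.lam τ
  | Tm.app t _ => headOf t

/-- Number of occurrences of the free variable `(n : τ)` in a term. -/
def occFV (n : ℕ) (τ : Ty) : Tm → ℕ
  | Tm.bvar _ => 0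
  | Tm.fvar m ρ => if m = n ∧ ρ = τ then 1 else 0
  | Tm.const _ _ => 0
  | Tm.lam _ t => occFV n τ t
  | Tm.app a b => occFV n τ a + occFV n τ b

/-- A term containing no free variables (ground). -/
def NoFV : Tm → Prop
  | Tm.bvar _ => True
  | Tm.fvar _ _ => False
  | Tm.const _ _ => True
  | Tm.lam _ t => NoFV t
  | Tm.app a b => NoFV a ∧ NoFV b

/-- A strict upper bound on the names of free variables occurring in a term. -/
def fvBound : Tm → ℕ
  | Tm.bvar _ => 0
  | Tm.fvar n _ => n + 1
  | Tm.const _ _ => 0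
  | Tm.lam _ t => fvBound t
  | Tm.app a b => max (fvBound a) (fvBound b)

/-- Apply a (total) map from free variables to terms. -/
def applyMap (σ : ℕ → Ty → Tm) : Tm → Tm
  | Tm.bvar i => Tm.bvar i
  | Tm.fvar n τ => σ n τ
  | Tm.const n τ => Tm.const n τ
  | Tm.lam τ t => Tm.lam τ (applyMap σ t)
  | Tm.app a b => Tm.app (applyMap σ a) (applyMap σ b)

/-- A substitution: a type-preserving map from free variables to locally
closed terms, equal to the identity outside a finite domain.  Since the terms
in its range are locally closed, application is capture-avoiding. -/
structure Subst where
  map : ℕ → Ty → Tm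
  wt : ∀ n τ, HasType [] (map n τ) τ
  fin : {p : ℕ × Ty | map p.1 p.2 ≠ Tm.fvar p.1 p.2}.Finite

def Subst.apply (σ : Subst) (t : Tm) : Tm := applyMap σ.map t

def idSubst : Subst where
  map := fun n τ => Tm.fvar n τ
  wt := fun _ _ => HasType.fvar
  fin := by
    have h : {p : ℕ × Ty | Tm.fvar p.1 p.2 ≠ Tm.fvar p.1 p.2} = ∅ := by ext p; simp
    rw [h]; exact Set.finite_empty

def Subst.update (σ : Subst) (n : ℕ) (τ : Ty) (u : Tm) (hu : HasType [] u τ) : Subst where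
  map := fun m ρ => if m = n ∧ ρ = τ then u else σ.map m ρ
  wt := by
    intro m ρ
    try dsimp only
    by_cases h : m = n ∧ ρ = τ
    · rw [if_pos h]
      obtain ⟨-, rfl⟩ := h
      exact hu
    · rw [if_neg h]; exact σ.wt m ρ
  fin := by
    apply (σ.fin.insert (n, τ)).subset
    intro p hp
    simp only [Set.mem_setOf_eq] at hp
    by_cases h : p = (n, τ)
    · exact h ▸ Set.mem_insert _ _
    · have hne : ¬ (p.1 = n ∧ p.2 = τ) := by
        intro hc
        apply h
        cases p
        exact Prod.ext hc.1 hc.2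
      rw [if_neg hne] at hp
      exact Set.mem_insert_of_mem _ hp

/-- A ground substitution: terms in its range contain no free variables. -/
def Subst.Ground (σ : Subst) : Prop :=
  ∀ n τ, σ.map n τ ≠ Tm.fvar n τ → NoFV (σ.map n τ)

/-- The base type `α`, the types `α → α` and `α → α → α`. -/
def tyFF : Ty := Ty.arr Ty.base Ty.base
def ty2 : Ty := Ty.arr Ty.base (Ty.arr Ty.base Ty.base)

/-- The constant `f : α → α`. -/
def fC : Tm := Tm.const 0 tyFF

/-- `s = λx:α.λy:α. f(x)`. -/
def sTerm : Tm := Tm.lam Ty.base (Tm.lam Ty.base (Tm.app fC (Tm.bvar 1)))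
/-- `t = λx:α.λy:α. f(y)`. -/
def tTerm : Tm := Tm.lam Ty.base (Tm.lam Ty.base (Tm.app fC (Tm.bvar 0)))

/-- `appList h [s₁,…,sₘ] = h s₁ … sₘ`. -/
def appList (h : Tm) (args : List Tm) : Tm := args.foldl Tm.app h
/-- `mkLams [τ₁,…,τₘ] t = λb₁:τ₁…λbₘ:τₘ. t`. -/
def mkLams (τs : List Ty) (t : Tm) : Tm := τs.foldr Tm.lam t
/-- `appBVars h m = h bₘ₋₁ … b₀` : apply `h` to the `m` innermost binders. -/
def appBVars (h : Tm) (m : ℕ) : Tm :=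
  ((List.range m).reverse).foldl (fun acc i => Tm.app acc (Tm.bvar i)) h

inductive SubtermOf : Tm → Tm → Prop where
  | refl (t) : SubtermOf t t
  | lam {u τ t} : SubtermOf u t → SubtermOf u (Tm.lam τ t)
  | appL {u t v} : SubtermOf u t → SubtermOf u (Tm.app t v)
  | appR {u t v} : SubtermOf u v → SubtermOf u (Tm.app t v)

/-- The η-normal form of an argument of a free variable in a superpattern is a
bound variable or has a free-variable head. -/
def ArgOK (s : Tm) : Prop :=
  ∀ s', IsEtaNF s s' →
    (∃ i, s' = Tm.bvar i) ∨ (∃ n ρ, headOf s' = Head.fvar n ρ)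

/-- Superpatterns (Definition `superpattern`): for every subterm occurrence
`X(s₁,…,sₘ)` headed by a free variable, every argument is (in η-normal form)
a bound variable or free-variable-headed, and the bound-variable arguments
are pairwise distinct. -/
def IsSuperpattern (t : Tm) : Prop :=
  ∀ u, SubtermOf u t → ∀ X τ args, u = appList (Tm.fvar X τ) args →
    (∀ s ∈ args, ArgOK s) ∧
    (∀ (i j : ℕ) (hi : i < args.length) (hj : j < args.length) (si' sj' : Tm),
       IsEtaNF (args[i]'hi) si' → IsEtaNF (args[j]'hj) sj' →
       (∃ a, si' = Tm.bvar a) → si' = sj' → i = j)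

/-- The class `Λ` of all (simply-typed) λ-terms. -/
def ΛAll : Tm → Prop := fun _ => True

/-- `g` is an `L`-generalization of `s = λx,y.f(x)` and `t = λx,y.f(y)`. -/
def Gen (L : Tm → Prop) (g : Tm) : Prop :=
  L g ∧ HasType [] g ty2 ∧
  ∃ σ₁ σ₂ : Subst, AbeEq (σ₁.apply g) sTerm ∧ AbeEq (σ₂.apply g) tTerm

/-- The instantiation quasi-order `g ≤ g'` : `gσ =_{αβη} g'` for some `σ`.
(The same relation defines `≤_Λ` and `≤_{Λ_sp}`.) -/
def LeGen (g g' : Tm) : Prop := ∃ σ : Subst, AbeEq (σ.apply g) g'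

/-- `C` is a complete set of `L`-generalizations of `s` and `t`. -/
def CompleteSet (L : Tm → Prop) (C : Set Tm) : Prop :=
  (∀ g ∈ C, Gen L g) ∧ ∀ g', Gen L g' → ∃ g ∈ C, LeGen g' g

def zVar : ℕ := 0

/-- The pattern generalization `λx:α.λy:α. f(Z(x,y))` with `Z : α → α → α`. -/
def patternG : Tm :=
  Tm.lam Ty.base (Tm.lam Ty.base
    (Tm.app fC (Tm.app (Tm.app (Tm.fvar zVar ty2) (Tm.bvar 1)) (Tm.bvar 0))))

/-- `L`-pattern-derived generalizations: `λx.λy.f(Z(x,y)) ≤_L g`. -/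
def PatternDerived (L : Tm → Prop) (g : Tm) : Prop := Gen L g ∧ LeGen patternG g

/-- `(σ₁,σ₂) ∈ GS_gnd(s,t,g)` : generalizing substitutions with ground ranges. -/
def GSgnd (g : Tm) (σ₁ σ₂ : Subst) : Prop :=
  AbeEq (σ₁.apply g) sTerm ∧ AbeEq (σ₂.apply g) tTerm ∧ σ₁.Ground ∧ σ₂.Ground

/-- `subst1 n τ u` is the substitution `{(n:τ) ↦ u}` (as a syntactic map). -/
def subst1 (n : ℕ) (τ : Ty) (u : Tm) : Tm → Tm
  | Tm.bvar i => Tm.bvar i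
  | Tm.fvar m ρ => if m = n ∧ ρ = τ then u else Tm.fvar m ρ
  | Tm.const m ρ => Tm.const m ρ
  | Tm.lam ρ t => Tm.lam ρ (subst1 n τ u t)
  | Tm.app a b => Tm.app (subst1 n τ u a) (subst1 n τ u b)

/-- The two conditions of Definition `patternDerived` (`L`-tightness): no free
variable `W` of `g` can be eliminated by a projection, nor by substituting its
image under a pair of ground generalizing substitutions, while remaining a
generalization. -/
def TightCond (L : Tm → Prop) (g : Tm) : Prop :=
  ∀ W τ, occFV W τ g ≠ 0 →
    (∀ (γs : List Ty) (i : ℕ) (hi : i < γs.length),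
        τ = mkArrow γs (γs[i]'hi) →
        ¬ Gen L (subst1 W τ (mkLams γs (Tm.bvar (γs.length - 1 - i))) g)) ∧
    (∀ σ₁ σ₂ : Subst, GSgnd g σ₁ σ₂ →
        ¬ Gen L (subst1 W τ (σ₁.map W τ) g) ∧ ¬ Gen L (subst1 W τ (σ₂.map W τ) g))

/-- `L`-tight generalizations. -/
def IsTight (L : Tm → Prop) (g : Tm) : Prop := PatternDerived L g ∧ TightCond L g

/-- The projections `λw₁.λw₂.w₁` and `λw₁.λw₂.w₂` of type `α → α → α`. -/
def proj1 : Tm := Tm.lam Ty.base (Tm.lam Ty.base (Tm.bvar 1))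
def proj2 : Tm := Tm.lam Ty.base (Tm.lam Ty.base (Tm.bvar 0))

theorem proj1_wt : HasType [] proj1 ty2 :=
  HasType.lam (HasType.lam (HasType.bvar rfl))
theorem proj2_wt : HasType [] proj2 ty2 :=
  HasType.lam (HasType.lam (HasType.bvar rfl))

/-- `λb₁…bₘ. Y (r₁ b₁ … bₘ) (r₂ b₁ … bₘ)` with `Y : α → α → α`. -/
def pseudoBody (Y : ℕ) (δs : List Ty) (r₁ r₂ : Tm) : Tm :=
  mkLams δs (Tm.app (Tm.app (Tm.fvar Y ty2) (appBVars (shift δs.length 0 r₁) δs.length))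
                    (appBVars (shift δs.length 0 r₂) δs.length))

/-- The shape `λx:α.λy:α. f(Z(s₁,…,sₘ))` of a `Λ`-tight generalization, where
`Z : δ₁ → ⋯ → δₘ → α`. -/
def tightForm (z : ℕ) (δs : List Ty) (args : List Tm) : Tm :=
  Tm.lam Ty.base (Tm.lam Ty.base
    (Tm.app fC (appList (Tm.fvar z (mkArrow δs Ty.base)) args)))

/-- The argument of `f` in the `(g,Λ)`-pseudo-pattern `G_Λ(g,Z,Y,σ₁,σ₂)`. -/
def pseudoArg (z Y : ℕ) (δs : List Ty) (args : List Tm) (r₁ r₂ : Tm) : Tm :=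
  subst1 z (mkArrow δs Ty.base) (pseudoBody Y δs r₁ r₂)
    (appList (Tm.fvar z (mkArrow δs Ty.base)) args)

/-- The `(g,Λ)`-pseudo-pattern `G_Λ(g,Z,Y,σ₁,σ₂) = g{Z ↦ λb̄. Y(r₁ b̄, r₂ b̄)}`. -/
def pseudoPat (z Y : ℕ) (δs : List Ty) (args : List Tm) (r₁ r₂ : Tm) : Tm :=
  Tm.lam Ty.base (Tm.lam Ty.base (Tm.app fC (pseudoArg z Y δs args r₁ r₂)))

/-- Subterm at a (binary-tree) position. -/
def subAt : Tm → List ℕ → Option Tm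
  | t, [] => some t
  | Tm.lam _ t, 0 :: p => subAt t p
  | Tm.app a _, 0 :: p => subAt a p
  | Tm.app _ b, 1 :: p => subAt b p
  | _, _ => none

/-- Replace the subterm at a position (identity on invalid positions). -/
def replaceAt : Tm → List ℕ → Tm → Tm
  | _, [], u => u
  | Tm.lam τ t, 0 :: p, u => Tm.lam τ (replaceAt t p u)
  | Tm.app a b, 0 :: p, u => Tm.app (replaceAt a p u) b
  | Tm.app a b, 1 :: p, u => Tm.app a (replaceAt b p u)
  | t, _, _ => t

def inferTy : List Ty → Tm → Option Ty
  | Γ, Tm.bvar i => Γ[i]?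
  | _, Tm.fvar _ τ => some τ
  | _, Tm.const _ τ => some τ
  | Γ, Tm.lam τ t => (inferTy (τ :: Γ) t).map (Ty.arr τ)
  | Γ, Tm.app a b =>
      match inferTy Γ a, inferTy Γ b with
      | some (Ty.arr τ ρ), some τ' => if τ = τ' then some ρ else none
      | _, _ => none

/-- `(Σ,w̄)`-representative positions: the η-normal form of the subterm is
headed by a constant of `Σ` or an abstraction. -/
def RepPos (r : Tm) (q : List ℕ) : Prop :=
  ∃ u u', subAt r q = some u ∧ IsEtaNF u u' ∧
    ((∃ τ, headOf u' = Head.lam τ) ∨ (∃ n τ, headOf u' = Head.const n τ))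

/-- `(Σ,w̄)`-maximal positions: representative, with no representative
position strictly above. -/
def MaxPos (r : Tm) (q : List ℕ) : Prop :=
  RepPos r q ∧ ∀ p, p <+: q → p ≠ q → ¬ RepPos r p

/-- The term `H(x,y)` replacing a maximal subterm of `r` during lifting, where
`H : α → α → ν_q` and `ν_q` is the type of the subterm of `r` at `q`. -/
def liftReplacement (r : Tm) (q : List ℕ) (H : ℕ) : Tm :=
  Tm.app (Tm.app (Tm.fvar H (Ty.arr Ty.base (Ty.arr Ty.base
    ((inferTy [Ty.base, Ty.base] ((subAt r q).getD r)).getD Ty.base)))) (Tm.bvar 1)) (Tm.bvar 0)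

/-- `LiftOf avoid r r'` : `r'` is obtained from `r` (the argument of `f`,
under the binders `x, y`) by replacing the subterm at each `(Σ,w̄)`-maximal
position by `H_q(x,y)` for pairwise distinct fresh free variables `H_q`
(all names `≥ avoid`). -/
def LiftOf (avoid : ℕ) (r r' : Tm) : Prop :=
  ∃ (qs : List (List ℕ)) (names : List ℕ),
    qs.Nodup ∧ names.Nodup ∧ names.length = qs.length ∧
    (∀ n ∈ names, avoid ≤ n) ∧
    (∀ q, q ∈ qs ↔ MaxPos r q) ∧
    r' = (qs.zip names).foldl (fun acc p => replaceAt acc p.1 (liftReplacement r p.1 p.2)) r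

/-- `λw₁.λw₂. Y(Y(w₁,w₂),Y(w₁,w₂))`. -/
def dupTm (Y : ℕ) : Tm :=
  Tm.lam Ty.base (Tm.lam Ty.base
    (Tm.app (Tm.app (Tm.fvar Y ty2)
              (Tm.app (Tm.app (Tm.fvar Y ty2) (Tm.bvar 1)) (Tm.bvar 0)))
            (Tm.app (Tm.app (Tm.fvar Y ty2) (Tm.bvar 1)) (Tm.bvar 0))))

/-- The singleton substitution `{(n:τ) ↦ u}`. -/
def single (n : ℕ) (τ : Ty) (u : Tm) (hu : HasType [] u τ) : Subst :=
  idSubst.update n τ u hu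

/-- `λx.λy. f(R(x,y))` (with `R` the free variable `zVar : α → α → α`). -/
def pat1 : Tm := patternG

/-- `λx.λy. f(R(R(x,y),R(x,y)))`. -/
def pat2 : Tm :=
  Tm.lam Ty.base (Tm.lam Ty.base (Tm.app fC
    (Tm.app (Tm.app (Tm.fvar zVar ty2)
              (Tm.app (Tm.app (Tm.fvar zVar ty2) (Tm.bvar 1)) (Tm.bvar 0)))
            (Tm.app (Tm.app (Tm.fvar zVar ty2) (Tm.bvar 1)) (Tm.bvar 0)))))

/-! ### Auxiliary lemmas -/

/-- Bound-variable scoping: all loose bvar indices are `< k`. -/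
def Scoped : ℕ → Tm → Prop
  | k, Tm.bvar i => i < k
  | _, Tm.fvar _ _ => True
  | _, Tm.const _ _ => True
  | k, Tm.lam _ t => Scoped (k + 1) t
  | k, Tm.app a b => Scoped k a ∧ Scoped k b

theorem scoped_mono : ∀ (t : Tm) {k k' : ℕ}, k ≤ k' → Scoped k t → Scoped k' t
  | Tm.bvar i, k, k', h, hs => lt_of_lt_of_le hs h
  | Tm.fvar _ _, _, _, _, _ => trivial
  | Tm.const _ _, _, _, _, _ => trivial
  | Tm.lam _ t, k, k', h, hs => scoped_mono t (Nat.succ_le_succ h) hs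
  | Tm.app a b, k, k', h, hs => ⟨scoped_mono a h hs.1, scoped_mono b h hs.2⟩

theorem hasType_scoped : ∀ {Γ : List Ty} {t : Tm} {τ : Ty},
    HasType Γ t τ → Scoped Γ.length t := by
  intro Γ t τ h
  induction h with
  | @bvar Γ i τ h =>
    have := List.getElem?_eq_some_iff.mp h
    exact this.1
  | fvar => trivial
  | const => trivial
  | lam _ ih => exact ih
  | app _ _ ih1 ih2 => exact ⟨ih1, ih2⟩

theorem shift_scoped : ∀ (t : Tm) {c : ℕ} (d : ℕ), Scoped c t → shift d c t = t := by
  intro t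
  induction t with
  | bvar i => intro c d h; have h' : i < c := h; simp only [shift]; rw [if_pos h']
  | fvar n τ => intro c d h; rfl
  | const n τ => intro c d h; rfl
  | lam τ t ih => intro c d h; simp only [shift]; rw [ih d h]
  | app a b iha ihb =>
    intro c d h; simp only [shift]; rw [iha d h.1, ihb d h.2]

theorem shift_zero : ∀ (t : Tm) (c : ℕ), shift 0 c t = t := by
  intro t
  induction t with
  | bvar i => intro c; simp only [shift]; split <;> rfl
  | fvar n τ => intro c; rfl
  | const n τ => intro c; rfl
  | lam τ t ih => intro c; simp only [shift, ih]
  | app a b iha ihb => intro c; simp only [shift, iha, ihb]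

theorem scoped_shift_inv : ∀ (t : Tm) {k c : ℕ}, c ≤ k →
    Scoped (k + 1) (shift 1 c t) → Scoped k t := by
  intro t
  induction t with
  | bvar i =>
    intro k c hck hs
    simp only [shift] at hs
    by_cases h : i < c
    · rw [if_pos h] at hs
      exact show i < k from lt_of_lt_of_le h hck
    · rw [if_neg h] at hs
      have h2 : i + 1 < k + 1 := hs
      show i < k
      omega
  | fvar n τ => intro k c _ _; trivial
  | const n τ => intro k c _ _; trivial
  | lam τ t ih =>
    intro k c hck hs
    exact ih (Nat.succ_le_succ hck) hs
  | app a b iha ihb =>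
    intro k c hck hs
    exact ⟨iha hck hs.1, ihb hck hs.2⟩

theorem noFV_shift : ∀ (t : Tm) {d c : ℕ}, NoFV (shift d c t) ↔ NoFV t := by
  intro t
  induction t with
  | bvar i => intro d c; simp only [shift]; split <;> simp [NoFV]
  | fvar n τ => intro d c; simp [shift]
  | const n τ => intro d c; simp [shift]
  | lam τ t ih => intro d c; simpa [shift, NoFV] using ih
  | app a b iha ihb => intro d c; simp [shift, NoFV, iha, ihb]

def sizeT : Tm → ℕ
  | Tm.bvar _ => 1
  | Tm.fvar _ _ => 1
  | Tm.const _ _ => 1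
  | Tm.lam _ t => sizeT t + 1
  | Tm.app a b => sizeT a + sizeT b + 1

theorem sizeT_shift : ∀ (t : Tm) (d c : ℕ), sizeT (shift d c t) = sizeT t := by
  intro t
  induction t with
  | bvar i => intro d c; simp only [shift]; split <;> rfl
  | fvar n τ => intro d c; rfl
  | const n τ => intro d c; rfl
  | lam τ t ih => intro d c; simp [shift, sizeT, ih]
  | app a b iha ihb => intro d c; simp [shift, sizeT, iha, ihb]

theorem etaStep_size {t u : Tm} (h : EtaStep t u) : sizeT u < sizeT t := by
  induction h with
  | eta τ t => simp [sizeT, sizeT_shift]; omega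
  | lam _ ih => simp [sizeT]; omega
  | appL _ ih => simp [sizeT]; omega
  | appR _ ih => simp [sizeT]; omega

theorem exists_etanf (t : Tm) : ∃ t', IsEtaNF t t' := by
  have H : ∀ n (t : Tm), sizeT t ≤ n → ∃ t', IsEtaNF t t' := by
    intro n
    induction n with
    | zero =>
      intro t ht
      cases t <;> simp [sizeT] at ht
    | succ n ih =>
      intro t ht
      by_cases hc : ∀ u, ¬ EtaStep t u
      · exact ⟨t, Relation.ReflTransGen.refl, hc⟩
      · push_neg at hc
        obtain ⟨u, hu⟩ := hc
        obtain ⟨t', h1, h2⟩ := ih u (by have := etaStep_size hu; omega)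
        exact ⟨t', Relation.ReflTransGen.head hu h1, h2⟩
  exact H (sizeT t) t le_rfl

theorem etaRed_inv {P : Tm → Prop} (hP : ∀ t u, EtaStep t u → P t → P u) :
    ∀ {t u : Tm}, EtaRed t u → P t → P u := by
  intro t u h
  induction h with
  | refl => exact id
  | tail _ hstep ih => intro hp; exact hP _ _ hstep (ih hp)

theorem etaStep_noFV : ∀ {t u : Tm}, EtaStep t u → NoFV t → NoFV u := by
  intro t u h
  induction h with
  | eta τ t => intro hn; exact (noFV_shift t).mp hn.1
  | lam _ ih => intro hn; exact ih hn
  | appL _ ih => intro hn; exact ⟨ih hn.1, hn.2⟩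
  | appR _ ih => intro hn; exact ⟨hn.1, ih hn.2⟩

theorem etaStep_scoped : ∀ {t u : Tm}, EtaStep t u → ∀ {k}, Scoped k t → Scoped k u := by
  intro t u h
  induction h with
  | eta τ t => intro k hn; exact scoped_shift_inv t (Nat.zero_le k) hn.1
  | lam _ ih => intro k hn; exact ih hn
  | appL _ ih => intro k hn; exact ⟨ih hn.1, hn.2⟩
  | appR _ ih => intro k hn; exact ⟨hn.1, ih hn.2⟩
theorem etaStep_headOf_fvar {n : ℕ} {ρ : Ty} :
    ∀ {t u : Tm}, EtaStep t u → headOf t = Head.fvar n ρ → headOf u = Head.fvar n ρ := by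
  intro t u h
  induction h with
  | eta τ t => intro hh; simp [headOf] at hh
  | lam _ _ => intro hh; simp [headOf] at hh
  | appL _ ih => intro hh; simp only [headOf] at hh ⊢; exact ih hh
  | appR _ _ => intro hh; simpa [headOf] using hh

theorem etaRed_headOf_fvar {n : ℕ} {ρ : Ty} {t u : Tm} (h : EtaRed t u)
    (hh : headOf t = Head.fvar n ρ) : headOf u = Head.fvar n ρ :=
  etaRed_inv (fun _ _ hs => etaStep_headOf_fvar hs) h hh

theorem etaStep_fvar {n : ℕ} {ρ : Ty} {u : Tm} (h : EtaStep (Tm.fvar n ρ) u) : False := by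
  cases h

theorem etaRed_fvar {n : ℕ} {ρ : Ty} {u : Tm} (h : EtaRed (Tm.fvar n ρ) u) :
    u = Tm.fvar n ρ := by
  rcases (Relation.ReflTransGen.cases_head h) with rfl | ⟨c, hc, _⟩
  · rfl
  · exact absurd hc etaStep_fvar

theorem noFV_headOf_ne_fvar : ∀ {t : Tm}, NoFV t → ∀ {n ρ}, headOf t ≠ Head.fvar n ρ := by
  intro t
  induction t with
  | bvar i => intro _ n ρ h; simp [headOf] at h
  | fvar n τ => intro hn; exact absurd hn (by simp [NoFV])
  | const n τ => intro _ n ρ h; simp [headOf] at h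
  | lam τ t _ => intro _ n ρ h; simp [headOf] at h
  | app a b iha _ => intro hn n ρ h; exact iha hn.1 h

theorem scoped0_headOf_ne_bvar : ∀ {t : Tm}, Scoped 0 t → ∀ {i}, headOf t ≠ Head.bvar i := by
  intro t
  induction t with
  | bvar j => intro hs; exact absurd hs (by simp [Scoped])
  | fvar n τ => intro _ i h; simp [headOf] at h
  | const n τ => intro _ i h; simp [headOf] at h
  | lam τ t _ => intro _ i h; simp [headOf] at h
  | app a b iha _ => intro hs i h; exact iha hs.1 h

theorem headOf_cases (t : Tm) :
    (∃ i, headOf t = Head.bvar i) ∨ (∃ n ρ, headOf t = Head.fvar n ρ) ∨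
    (∃ n ρ, headOf t = Head.const n ρ) ∨ (∃ τ, headOf t = Head.lam τ) := by
  induction t with
  | bvar i => exact Or.inl ⟨i, rfl⟩
  | fvar n τ => exact Or.inr (Or.inl ⟨n, τ, rfl⟩)
  | const n τ => exact Or.inr (Or.inr (Or.inl ⟨n, τ, rfl⟩))
  | lam τ t _ => exact Or.inr (Or.inr (Or.inr ⟨τ, rfl⟩))
  | app a b iha _ => exact iha

/-- `GoodBody b` : `b` is a (possibly iterated) λ-body ending in an application
whose argument is itself an application, so that no η-step can ever expose the
body as an η-redex. -/
inductive GoodBody : Tm → Prop where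
  | app (x y z : Tm) : GoodBody (Tm.app x (Tm.app y z))
  | lam (τ : Ty) {b : Tm} : GoodBody b → GoodBody (Tm.lam τ b)

theorem goodBody_step : ∀ {b b' : Tm}, GoodBody b → EtaStep b b' → GoodBody b' := by
  intro b b' hg
  induction hg generalizing b' with
  | app x y z =>
    intro hs
    cases hs with
    | appL h => exact GoodBody.app _ _ _
    | appR h => cases h with
      | appL _ => exact GoodBody.app _ _ _
      | appR _ => exact GoodBody.app _ _ _
  | lam τ hb ih =>
    intro hs
    cases hs with
    | eta τ' t => cases hb
    | lam h => exact GoodBody.lam _ (ih h)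

/-- A left application spine whose head is a λ with a `GoodBody` body:
its η-normal form is λ-headed. -/
inductive SpineLam : Tm → Prop where
  | lam (τ : Ty) {b : Tm} : GoodBody b → SpineLam (Tm.lam τ b)
  | app {a : Tm} (b : Tm) : SpineLam a → SpineLam (Tm.app a b)

theorem spineLam_step : ∀ {t u : Tm}, SpineLam t → EtaStep t u → SpineLam u := by
  intro t u hg
  induction hg generalizing u with
  | lam τ hb =>
    intro hs
    cases hs with
    | eta τ' t => cases hb
    | lam h => exact SpineLam.lam _ (goodBody_step hb h)
  | app b ha ih =>
    intro hs
    cases hs with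
    | appL h => exact SpineLam.app _ (ih h)
    | appR h => exact SpineLam.app _ ha

theorem spineLam_head : ∀ {t : Tm}, SpineLam t → ∃ τ, headOf t = Head.lam τ := by
  intro t h
  induction h with
  | lam τ _ => exact ⟨τ, rfl⟩
  | app b _ ih => exact ih

theorem appList_nil (h : Tm) : appList h [] = h := rfl
theorem appList_cons (h : Tm) (a : Tm) (l : List Tm) :
    appList h (a :: l) = appList (Tm.app h a) l := rfl

theorem spineLam_appList : ∀ (l : List Tm) (h : Tm), SpineLam h → SpineLam (appList h l) := by
  intro l
  induction l with
  | nil => intro h hh; exact hh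
  | cons a l ih => intro h hh; rw [appList_cons]; exact ih _ (SpineLam.app _ hh)

theorem goodBody_mkLams : ∀ (l : List Ty) {b : Tm}, GoodBody b → GoodBody (mkLams l b) := by
  intro l
  induction l with
  | nil => intro b hb; exact hb
  | cons τ l ih => intro b hb; exact GoodBody.lam τ (ih hb)

theorem appBVars_zero (h : Tm) : appBVars h 0 = h := rfl

theorem appBVars_succ (h : Tm) (k : ℕ) :
    appBVars h (k + 1) = appBVars (Tm.app h (Tm.bvar k)) k := by
  simp [appBVars, List.range_succ]

theorem appBVars_succ_shape (k : ℕ) : ∀ (h : Tm), ∃ w, appBVars h (k + 1) = Tm.app w (Tm.bvar 0) := by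
  induction k with
  | zero => intro h; exact ⟨h, by simp [appBVars, List.range_succ, appList]⟩
  | succ k ih =>
    intro h
    rw [appBVars_succ]
    exact ih _

theorem subst1_appList (n : ℕ) (τ : Ty) (u : Tm) :
    ∀ (l : List Tm) (h : Tm),
      subst1 n τ u (appList h l) = appList (subst1 n τ u h) (l.map (subst1 n τ u)) := by
  intro l
  induction l with
  | nil => intro h; rfl
  | cons a l ih => intro h; simp only [List.map, appList_cons, ih, subst1]

theorem occFV_appList_le (n : ℕ) (τ : Ty) :
    ∀ (l : List Tm) (h : Tm), occFV n τ h ≤ occFV n τ (appList h l) := by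
  intro l
  induction l with
  | nil => intro h; exact le_rfl
  | cons a l ih =>
    intro h
    rw [appList_cons]
    exact le_trans (Nat.le_add_right _ _) (ih (Tm.app h a))

theorem subst1_same (n : ℕ) (τ : Ty) : ∀ (t : Tm), subst1 n τ (Tm.fvar n τ) t = t := by
  intro t
  induction t with
  | bvar i => rfl
  | fvar m ρ =>
    simp only [subst1]
    split
    · rename_i hh; rw [hh.1, hh.2]
    · rfl
  | const m ρ => rfl
  | lam τ' t ih => simp [subst1, ih]
  | app a b iha ihb => simp [subst1, iha, ihb]
theorem hasType_weaken {Γ : List Ty} {t : Tm} {τ : Ty} (h : HasType Γ t τ)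
    (Δ : List Ty) : HasType (Γ ++ Δ) t τ := by
  induction h with
  | @bvar Γ i τ h =>
    apply HasType.bvar
    have hi : i < Γ.length := (List.getElem?_eq_some_iff.mp h).1
    rw [List.getElem?_append_left hi]
    exact h
  | fvar => exact HasType.fvar
  | const => exact HasType.const
  | lam _ ih => exact HasType.lam ih
  | app _ _ ih1 ih2 => exact HasType.app ih1 ih2

theorem hasType_closed_weaken {t : Tm} {τ : Ty} (h : HasType [] t τ) (Γ : List Ty) :
    HasType Γ t τ := by
  simpa using hasType_weaken h Γ

theorem hasType_subst1 {n : ℕ} {τ : Ty} {u : Tm} (hu : HasType [] u τ) :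
    ∀ {Γ : List Ty} {t : Tm} {ρ : Ty}, HasType Γ t ρ → HasType Γ (subst1 n τ u t) ρ := by
  intro Γ t ρ h
  induction h with
  | bvar h => exact HasType.bvar h
  | @fvar Γ m ρ =>
    simp only [subst1]
    split
    · rename_i hh
      rw [hh.2]
      exact hasType_closed_weaken hu Γ
    · exact HasType.fvar
  | const => exact HasType.const
  | lam _ ih => exact HasType.lam ih
  | app _ _ ih1 ih2 => exact HasType.app ih1 ih2

theorem hasType_appList_inv :
    ∀ (l : List Tm) (h : Tm) (Γ : List Ty) (ρ : Ty), HasType Γ (appList h l) ρ →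
      ∃ τs : List Ty, τs.length = l.length ∧ HasType Γ h (mkArrow τs ρ) := by
  intro l
  induction l with
  | nil => intro h Γ ρ hh; exact ⟨[], rfl, hh⟩
  | cons a l ih =>
    intro h Γ ρ hh
    rw [appList_cons] at hh
    obtain ⟨τs, hlen, hty⟩ := ih _ _ _ hh
    cases hty with
    | app h1 h2 =>
      rename_i τ'
      exact ⟨τ' :: τs, by simp [hlen], h1⟩

theorem mkArrow_base_eq_nil {τs : List Ty} (h : mkArrow τs Ty.base = Ty.base) : τs = [] := by
  cases τs with
  | nil => rfl
  | cons τ l => simp [mkArrow] at h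

theorem hasType_mkLams :
    ∀ (δs : List Ty) (Γ : List Ty) (b : Tm) (ρ : Ty),
      HasType (δs.reverse ++ Γ) b ρ → HasType Γ (mkLams δs b) (mkArrow δs ρ) := by
  intro δs
  induction δs with
  | nil => intro Γ b ρ h; exact (by simpa using h : HasType Γ b ρ)
  | cons δ l ih =>
    intro Γ b ρ h
    show HasType Γ (Tm.lam δ (mkLams l b)) (Ty.arr δ (mkArrow l ρ))
    apply HasType.lam
    apply ih (δ :: Γ)
    simpa [List.append_assoc] using h

theorem hasType_appBVars :
    ∀ (δs : List Ty) (Γ : List Ty) (h : Tm) (ρ : Ty),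
      HasType (δs.reverse ++ Γ) h (mkArrow δs ρ) →
      HasType (δs.reverse ++ Γ) (appBVars h δs.length) ρ := by
  intro δs
  induction δs with
  | nil => intro Γ h ρ hh; exact hh
  | cons δ l ih =>
    intro Γ h ρ hh
    have hctx : (δ :: l).reverse ++ Γ = l.reverse ++ (δ :: Γ) := by
      simp [List.append_assoc]
    rw [List.length_cons, appBVars_succ, hctx]
    apply ih (δ :: Γ)
    rw [hctx] at hh
    apply HasType.app hh
    apply HasType.bvar
    rw [show l.length = l.reverse.length by simp]
    rw [List.getElem?_append_right le_rfl]
    simp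

theorem hasType_pseudoBody (Y : ℕ) (δs : List Ty) {r₁ r₂ : Tm}
    (h1 : HasType [] r₁ (mkArrow δs Ty.base)) (h2 : HasType [] r₂ (mkArrow δs Ty.base)) :
    HasType [] (pseudoBody Y δs r₁ r₂) (mkArrow δs Ty.base) := by
  apply hasType_mkLams
  have hs1 : shift δs.length 0 r₁ = r₁ := shift_scoped r₁ _ (hasType_scoped h1)
  have hs2 : shift δs.length 0 r₂ = r₂ := shift_scoped r₂ _ (hasType_scoped h2)
  rw [hs1, hs2]
  have hA1 : HasType (δs.reverse ++ []) (appBVars r₁ δs.length) Ty.base :=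
    hasType_appBVars δs [] r₁ Ty.base (hasType_closed_weaken h1 _)
  have hA2 : HasType (δs.reverse ++ []) (appBVars r₂ δs.length) Ty.base :=
    hasType_appBVars δs [] r₂ Ty.base (hasType_closed_weaken h2 _)
  exact HasType.app (HasType.app HasType.fvar (by simpa using hA1)) (by simpa using hA2)

theorem inferTy_sound : ∀ {Γ : List Ty} {t : Tm} {τ : Ty},
    HasType Γ t τ → inferTy Γ t = some τ := by
  intro Γ t τ h
  induction h with
  | bvar h => exact h
  | fvar => rfl
  | const => rfl
  | lam _ ih => simp [inferTy, ih]
  | app _ _ ih1 ih2 => simp [inferTy, ih1, ih2]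

theorem bsubst_id : ∀ (t : Tm) (k : ℕ), Scoped (k + 2) t →
    bsubst (bsubst t (k + 1) (Tm.bvar (k + 2))) k (Tm.bvar k) = t := by
  intro t
  induction t with
  | bvar i =>
    intro k hs
    have hi : i < k + 2 := hs
    by_cases h1 : i = k + 1
    · subst h1
      simp [bsubst]
    · simp only [bsubst]
      rw [if_neg h1, if_neg (by omega : ¬ k + 1 < i)]
      simp only [bsubst]
      by_cases h2 : i = k
      · rw [if_pos h2, h2]
      · rw [if_neg h2, if_neg (by omega : ¬ k < i)]
  | fvar n τ => intro k _; rfl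
  | const n τ => intro k _; rfl
  | lam τ t ih =>
    intro k hs
    have : Scoped (k + 3) t := hs
    simp only [bsubst]
    have hsh1 : shift 1 0 (Tm.bvar (k + 2)) = Tm.bvar (k + 3) := by simp [shift]
    have hsh2 : shift 1 0 (Tm.bvar k) = Tm.bvar (k + 1) := by simp [shift]
    rw [hsh1, hsh2]
    rw [show k + 1 + 1 = (k + 1) + 1 from rfl]
    rw [show k + 3 = (k + 1) + 2 from rfl]
    rw [ih (k + 1) this]
  | app a b iha ihb =>
    intro k hs
    simp only [bsubst]
    rw [iha k hs.1, ihb k hs.2]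

theorem abeEq_app2 {u : Tm} (h : Scoped 2 u) :
    AbeEq (Tm.app (Tm.app (Tm.lam Ty.base (Tm.lam Ty.base u)) (Tm.bvar 1)) (Tm.bvar 0)) u := by
  have h1 : AbeEq (Tm.app (Tm.lam Ty.base (Tm.lam Ty.base u)) (Tm.bvar 1))
      (bsubst (Tm.lam Ty.base u) 0 (Tm.bvar 1)) := AbeEq.beta _ _ _
  have e1 : bsubst (Tm.lam Ty.base u) 0 (Tm.bvar 1) =
      Tm.lam Ty.base (bsubst u 1 (Tm.bvar 2)) := by
    simp [bsubst, shift]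
  rw [e1] at h1
  refine AbeEq.trans (AbeEq.app h1 (AbeEq.refl _)) ?_
  refine AbeEq.trans (AbeEq.beta _ _ _) ?_
  rw [show (2 : ℕ) = 0 + 2 from rfl] at h
  rw [show (1 : ℕ) = 0 + 1 from rfl, show (2 : ℕ) = 0 + 2 from rfl]
  rw [bsubst_id u 0 h]
  exact AbeEq.refl u
theorem subAt_nil (t : Tm) : subAt t [] = some t := by cases t <;> rfl
theorem replaceAt_nil (t u : Tm) : replaceAt t [] u = u := by cases t <;> rfl

theorem single_map_self (n : ℕ) (τ : Ty) (u : Tm) (hu : HasType [] u τ) :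
    (single n τ u hu).map n τ = u := by
  simp [single, Subst.update]

theorem repPos_of_none {r : Tm} {q : List ℕ} (h : subAt r q = none) : ¬ RepPos r q := by
  intro ⟨u, u', hsub, _, _⟩
  rw [h] at hsub
  cases hsub

theorem prefix_of_pair {a b : ℕ} {p : List ℕ} (h : p <+: [a, b]) :
    p = [] ∨ p = [a] ∨ p = [a, b] := by
  obtain ⟨t, ht⟩ := h
  match p, ht with
  | [], _ => exact Or.inl rfl
  | [x], ht => simp at ht; exact Or.inr (Or.inl (by rw [ht.1]))
  | [x, y], ht => simp at ht; exact Or.inr (Or.inr (by rw [ht.1, ht.2.1]))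
  | x :: y :: z :: l, ht => simp at ht

theorem prefix_of_single {a : ℕ} {p : List ℕ} (h : p <+: [a]) :
    p = [] ∨ p = [a] := by
  obtain ⟨t, ht⟩ := h
  match p, ht with
  | [], _ => exact Or.inl rfl
  | [x], ht => simp at ht; exact Or.inr (by rw [ht.1])
  | x :: y :: l, ht => simp at ht

theorem nodup_all_eq {α : Type*} {l : List α} {a : α} (hnd : l.Nodup)
    (ha : a ∈ l) (hall : ∀ x ∈ l, x = a) : l = [a] := by
  cases l with
  | nil => cases ha
  | cons b t =>
    have hb : b = a := hall b List.mem_cons_self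
    subst hb
    rw [List.nodup_cons] at hnd
    have : t = [] := by
      cases t with
      | nil => rfl
      | cons c t' =>
        have : c = b := hall c (by simp)
        exact absurd (by rw [← this]; simp : b ∈ c :: t') hnd.1
    rw [this]

theorem nodup_all_eq_pair {α : Type*} {l : List α} {a b : α} (hnd : l.Nodup)
    (hne : a ≠ b) (ha : a ∈ l) (hb : b ∈ l) (hall : ∀ x ∈ l, x = a ∨ x = b) :
    l = [a, b] ∨ l = [b, a] := by
  cases l with
  | nil => cases ha
  | cons c t =>
    rw [List.nodup_cons] at hnd
    rcases hall c List.mem_cons_self with rfl | rfl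
    · left
      have hbt : b ∈ t := by
        rcases List.mem_cons.mp hb with h | h
        · exact absurd h.symm hne
        · exact h
      have : t = [b] := by
        apply nodup_all_eq hnd.2 hbt
        intro x hx
        rcases hall x (by simp [hx]) with rfl | rfl
        · exact absurd hx hnd.1
        · rfl
      rw [this]
    · right
      have hat : a ∈ t := by
        rcases List.mem_cons.mp ha with h | h
        · exact absurd h hne
        · exact h
      have : t = [a] := by
        apply nodup_all_eq hnd.2 hat
        intro x hx
        rcases hall x (by simp [hx]) with rfl | rfl
        · rfl
        · exact absurd hx hnd.1
      rw [this]

theorem occFV_lt_fvBound {n : ℕ} {τ : Ty} : ∀ {t : Tm}, occFV n τ t ≠ 0 → n < fvBound t := by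
  intro t
  induction t with
  | bvar i => intro h; simp [occFV] at h
  | fvar m ρ =>
    intro h
    simp only [occFV] at h
    split at h
    · rename_i hh
      simp only [fvBound]
      omega
    · simp at h
  | const m ρ => intro h; simp [occFV] at h
  | lam τ' t ih => intro h; exact ih h
  | app a b iha ihb =>
    intro h
    simp only [occFV] at h
    simp only [fvBound, lt_max_iff]
    rcases Nat.eq_zero_or_pos (occFV n τ a) with h0 | h0
    · exact Or.inr (ihb (by omega))
    · exact Or.inl (iha (by omega))

theorem applyMap_id_of_fresh {σ : ℕ → Ty → Tm}
    : ∀ {t : Tm}, (∀ n τ, occFV n τ t ≠ 0 → σ n τ = Tm.fvar n τ) → applyMap σ t = t := by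
  intro t
  induction t with
  | bvar i => intro _; rfl
  | fvar m ρ =>
    intro h
    exact h m ρ (by simp [occFV])
  | const m ρ => intro _; rfl
  | lam τ' t ih =>
    intro h
    simp only [applyMap]
    rw [ih (fun n τ hn => h n τ (by simpa [occFV] using hn))]
  | app a b iha ihb =>
    intro h
    simp only [applyMap]
    rw [iha (fun n τ hn => h n τ (by simp [occFV]; omega)),
        ihb (fun n τ hn => h n τ (by simp [occFV]; omega))]
theorem hasType_fvar_inv {Γ : List Ty} {n : ℕ} {τ ρ : Ty}
    (h : HasType Γ (Tm.fvar n τ) ρ) : ρ = τ := by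
  cases h; rfl

theorem tightForm_hasType_inv {z : ℕ} {δs : List Ty} {args : List Tm}
    (h : HasType [] (tightForm z δs args) ty2) :
    HasType [Ty.base, Ty.base] (appList (Tm.fvar z (mkArrow δs Ty.base)) args) Ty.base := by
  rw [show ty2 = Ty.arr Ty.base (Ty.arr Ty.base Ty.base) from rfl] at h
  unfold tightForm at h
  cases h with
  | lam h => cases h with
    | lam h => cases h with
      | app hf ha =>
        cases hf
        exact ha

theorem subAt_app0 (a b : Tm) (p : List ℕ) : subAt (Tm.app a b) (0 :: p) = subAt a p := rfl
theorem subAt_app1 (a b : Tm) (p : List ℕ) : subAt (Tm.app a b) (1 :: p) = subAt b p := rfl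
theorem subAt_fvar_cons (n : ℕ) (τ : Ty) (c : ℕ) (q : List ℕ) :
    subAt (Tm.fvar n τ) (c :: q) = none := by rcases c with _ | _ | c <;> rfl
theorem subAt_app_ge2 (a b : Tm) (c : ℕ) (q : List ℕ) :
    subAt (Tm.app a b) ((c + 2) :: q) = none := rfl
theorem replaceAt_app0 (a b u : Tm) (p : List ℕ) :
    replaceAt (Tm.app a b) (0 :: p) u = Tm.app (replaceAt a p u) b := rfl
theorem replaceAt_app1 (a b u : Tm) (p : List ℕ) :
    replaceAt (Tm.app a b) (1 :: p) u = Tm.app a (replaceAt b p u) := rfl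

/-- for a `Λ`-tight generalization `g` of `s` and `t`,
`(σ₁,σ₂) ∈ GS_gnd(s,t,g)` and fresh `Y`, the `(g,Λ_sp)`-pseudo-pattern is
below the `(g,Λ)`-pseudo-pattern in the instantiation quasi-order:
`G_{Λ_sp}(g,Z,Y,σ₁,σ₂) ≤_Λ G_Λ(g,Z,Y,σ₁,σ₂)`. -/
theorem sp_pseudo_pattern_below_pseudo_pattern
    (z Y : ℕ) (δs : List Ty) (args : List Tm) (σ₁ σ₂ : Subst)
    (htight : IsTight ΛAll (tightForm z δs args))
    (hgs : GSgnd (tightForm z δs args) σ₁ σ₂)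
    (hYfresh : ∀ τ, occFV Y τ (tightForm z δs args) = 0)
    (r' : Tm)
    (hlift : LiftOf
      (fvBound (pseudoPat z Y δs args
        (σ₁.map z (mkArrow δs Ty.base)) (σ₂.map z (mkArrow δs Ty.base))))
      (pseudoArg z Y δs args
        (σ₁.map z (mkArrow δs Ty.base)) (σ₂.map z (mkArrow δs Ty.base))) r') :
    LeGen (Tm.lam Ty.base (Tm.lam Ty.base (Tm.app fC r')))
      (pseudoPat z Y δs args
        (σ₁.map z (mkArrow δs Ty.base)) (σ₂.map z (mkArrow δs Ty.base))) := by
  have hGen : Gen ΛAll (tightForm z δs args) := htight.1.1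
  have htyG : HasType [] (tightForm z δs args) ty2 := hGen.2.1
  have hQ := tightForm_hasType_inv htyG
  have hr1ty : HasType [] (σ₁.map z (mkArrow δs Ty.base)) (mkArrow δs Ty.base) := σ₁.wt _ _
  have hr2ty : HasType [] (σ₂.map z (mkArrow δs Ty.base)) (mkArrow δs Ty.base) := σ₂.wt _ _
  obtain ⟨qs, names, hqnd, hnnd, hlen, hge, hiff, hr'⟩ := hlift
  cases δs with
  | cons δ rest =>
    set r₁ := σ₁.map z (mkArrow (δ :: rest) Ty.base) with hr₁def
    set r₂ := σ₂.map z (mkArrow (δ :: rest) Ty.base) with hr₂def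
    set R := pseudoArg z Y (δ :: rest) args r₁ r₂ with hRdef
    have hRty : HasType [Ty.base, Ty.base] R Ty.base :=
      hasType_subst1 (hasType_pseudoBody Y _ hr1ty hr2ty) hQ
    have hSp : SpineLam R := by
      show SpineLam (subst1 z (mkArrow (δ :: rest) Ty.base)
        (pseudoBody Y (δ :: rest) r₁ r₂)
        (appList (Tm.fvar z (mkArrow (δ :: rest) Ty.base)) args))
      rw [subst1_appList]
      apply spineLam_appList
      rw [show subst1 z (mkArrow (δ :: rest) Ty.base)
            (pseudoBody Y (δ :: rest) r₁ r₂)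
            (Tm.fvar z (mkArrow (δ :: rest) Ty.base)) =
          pseudoBody Y (δ :: rest) r₁ r₂ from by simp [subst1]]
      show SpineLam (Tm.lam δ (mkLams rest (Tm.app
        (Tm.app (Tm.fvar Y ty2) (appBVars (shift (δ :: rest).length 0 r₁) (δ :: rest).length))
        (appBVars (shift (δ :: rest).length 0 r₂) (δ :: rest).length))))
      apply SpineLam.lam
      apply goodBody_mkLams
      rw [show (δ :: rest).length = rest.length + 1 from rfl]
      obtain ⟨w, hw⟩ := appBVars_succ_shape rest.length (shift (rest.length + 1) 0 r₂)
      rw [hw]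
      exact GoodBody.app _ _ _
    obtain ⟨nf, hred, hnorm⟩ := exists_etanf R
    have hSpNf : SpineLam nf := etaRed_inv (fun _ _ hs hp => spineLam_step hp hs) hred hSp
    obtain ⟨τh, hh⟩ := spineLam_head hSpNf
    have hRep : RepPos R [] := ⟨R, nf, subAt_nil R, ⟨hred, hnorm⟩, Or.inl ⟨τh, hh⟩⟩
    have hmax : ∀ q, MaxPos R q ↔ q = [] := by
      intro q
      constructor
      · intro hq
        by_contra hne
        exact hq.2 [] List.nil_prefix (fun h => hne h.symm) hRep
      · rintro rfl
        refine ⟨hRep, fun p hp hne => ?_⟩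
        exact absurd (List.prefix_nil.mp hp) hne
    have hqs : qs = [[]] := by
      apply nodup_all_eq hqnd ((hiff []).mpr ((hmax []).mpr rfl))
      intro x hx
      exact (hmax x).mp ((hiff x).mp hx)
    obtain ⟨n0, hnames⟩ : ∃ n0, names = [n0] := by
      cases names with
      | nil => rw [hqs] at hlen; simp at hlen
      | cons a t =>
        cases t with
        | nil => exact ⟨a, rfl⟩
        | cons b t' => rw [hqs] at hlen; simp at hlen
    have hr'eq : r' = Tm.app (Tm.app (Tm.fvar n0 ty2) (Tm.bvar 1)) (Tm.bvar 0) := by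
      rw [hqs, hnames] at hr'
      simp only [List.zip, List.zipWith, List.foldl] at hr'
      rw [hr', replaceAt_nil]
      unfold liftReplacement
      rw [subAt_nil]
      simp only [Option.getD_some]
      rw [inferTy_sound hRty]
      rfl
    have hwt : HasType [] (Tm.lam Ty.base (Tm.lam Ty.base R)) ty2 :=
      HasType.lam (HasType.lam hRty)
    refine ⟨single n0 ty2 (Tm.lam Ty.base (Tm.lam Ty.base R)) hwt, ?_⟩
    show AbeEq (applyMap _ (Tm.lam Ty.base (Tm.lam Ty.base (Tm.app fC r')))) _
    rw [hr'eq]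
    simp only [applyMap]
    rw [single_map_self]
    show AbeEq _ (Tm.lam Ty.base (Tm.lam Ty.base (Tm.app fC R)))
    have hsc : Scoped 2 R := hasType_scoped hRty
    exact AbeEq.lam (AbeEq.lam (AbeEq.app (AbeEq.refl fC) (abeEq_app2 hsc)))
  | nil =>
    have hargs : args = [] := by
      obtain ⟨τs, hlen', hty⟩ := hasType_appList_inv args _ _ _ hQ
      have hτ := hasType_fvar_inv hty
      have hτs : τs = [] := mkArrow_base_eq_nil hτ
      rw [hτs] at hlen'
      exact List.length_eq_zero_iff.mp (by simpa using hlen'.symm)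
    subst hargs
    set r₁ := σ₁.map z (mkArrow [] Ty.base) with hr₁def
    set r₂ := σ₂.map z (mkArrow [] Ty.base) with hr₂def
    have hReq : pseudoArg z Y [] [] r₁ r₂ = Tm.app (Tm.app (Tm.fvar Y ty2) r₁) r₂ := by
      show subst1 z (mkArrow [] Ty.base) (pseudoBody Y [] r₁ r₂)
          (appList (Tm.fvar z (mkArrow [] Ty.base)) []) = _
      rw [appList_nil]
      rw [show subst1 z (mkArrow [] Ty.base) (pseudoBody Y [] r₁ r₂)
            (Tm.fvar z (mkArrow [] Ty.base)) = pseudoBody Y [] r₁ r₂ from by simp [subst1]]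
      show Tm.app (Tm.app (Tm.fvar Y ty2) (appBVars (shift 0 0 r₁) 0))
          (appBVars (shift 0 0 r₂) 0) = _
      rw [appBVars_zero, appBVars_zero, shift_zero, shift_zero]
    -- groundness of r₁ and r₂, via tightness
    have hocc : occFV z (mkArrow [] Ty.base) (tightForm z [] []) ≠ 0 := by
      simp [tightForm, occFV, appList, fC, mkArrow]
    have htc2 := (htight.2 z (mkArrow [] Ty.base) hocc).2 σ₁ σ₂ hgs
    have hne1 : r₁ ≠ Tm.fvar z (mkArrow [] Ty.base) := by
      intro h
      apply htc2.1
      rw [← hr₁def, h, subst1_same]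
      exact hGen
    have hne2 : r₂ ≠ Tm.fvar z (mkArrow [] Ty.base) := by
      intro h
      apply htc2.2
      rw [← hr₂def, h, subst1_same]
      exact hGen
    have hnfv1 : NoFV r₁ := hgs.2.2.1 z _ hne1
    have hnfv2 : NoFV r₂ := hgs.2.2.2 z _ hne2
    have hity1 : inferTy [Ty.base, Ty.base] r₁ = some Ty.base :=
      inferTy_sound (hasType_closed_weaken hr1ty _)
    have hity2 : inferTy [Ty.base, Ty.base] r₂ = some Ty.base :=
      inferTy_sound (hasType_closed_weaken hr2ty _)
    -- η-normal forms of ground closed terms are lam- or const-headed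
    have hRepArg : ∀ {u : Tm}, NoFV u → HasType [] u (mkArrow [] Ty.base) →
        ∃ u', IsEtaNF u u' ∧
          ((∃ τ, headOf u' = Head.lam τ) ∨ ∃ n τ, headOf u' = Head.const n τ) := by
      intro u hnfv hty
      obtain ⟨nf, hred, hnorm⟩ := exists_etanf u
      have hnfvnf : NoFV nf := etaRed_inv (fun _ _ hs => etaStep_noFV hs) hred hnfv
      have hscnf : Scoped 0 nf :=
        etaRed_inv (fun _ _ hs => etaStep_scoped hs) hred (hasType_scoped hty)
      refine ⟨nf, ⟨hred, hnorm⟩, ?_⟩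
      rcases headOf_cases nf with ⟨i, hi⟩ | ⟨n, ρ, hi⟩ | ⟨n, ρ, hi⟩ | ⟨τ, hi⟩
      · exact absurd hi (scoped0_headOf_ne_bvar hscnf)
      · exact absurd hi (noFV_headOf_ne_fvar hnfvnf)
      · exact Or.inr ⟨n, ρ, hi⟩
      · exact Or.inl ⟨τ, hi⟩
    rw [hReq] at hiff hr'
    -- non-representative positions
    have hfvhead : ∀ {t u' : Tm}, headOf t = Head.fvar Y ty2 → IsEtaNF t u' →
        ¬ ((∃ τ, headOf u' = Head.lam τ) ∨ ∃ n τ, headOf u' = Head.const n τ) := by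
      intro t u' hh hnf hcase
      have hf := etaRed_headOf_fvar hnf.1 hh
      rcases hcase with ⟨τ, hτ⟩ | ⟨n, ρ, hρ⟩
      · rw [hf] at hτ; exact Head.noConfusion hτ
      · rw [hf] at hρ; exact Head.noConfusion hρ
    have hnotRep_nil : ¬ RepPos (Tm.app (Tm.app (Tm.fvar Y ty2) r₁) r₂) [] := by
      rintro ⟨u, u', hsub, hnf, hcase⟩
      rw [subAt_nil] at hsub
      injection hsub with hsub
      subst hsub
      refine hfvhead ?_ hnf hcase
      rfl
    have hnotRep_0 : ¬ RepPos (Tm.app (Tm.app (Tm.fvar Y ty2) r₁) r₂) [0] := by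
      rintro ⟨u, u', hsub, hnf, hcase⟩
      rw [subAt_app0, subAt_nil] at hsub
      injection hsub with hsub
      subst hsub
      refine hfvhead ?_ hnf hcase
      rfl
    have hnotRep_00 : ¬ RepPos (Tm.app (Tm.app (Tm.fvar Y ty2) r₁) r₂) [0, 0] := by
      rintro ⟨u, u', hsub, hnf, hcase⟩
      rw [subAt_app0, subAt_app0, subAt_nil] at hsub
      injection hsub with hsub
      subst hsub
      have := etaRed_fvar hnf.1
      subst this
      refine hfvhead ?_ ⟨Relation.ReflTransGen.refl, hnf.2⟩ hcase
      rfl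
    have hRep01 : RepPos (Tm.app (Tm.app (Tm.fvar Y ty2) r₁) r₂) [0, 1] := by
      obtain ⟨u', hnf, hcase⟩ := hRepArg hnfv1 hr1ty
      exact ⟨r₁, u', by rw [subAt_app0, subAt_app1, subAt_nil], hnf, hcase⟩
    have hRep1 : RepPos (Tm.app (Tm.app (Tm.fvar Y ty2) r₁) r₂) [1] := by
      obtain ⟨u', hnf, hcase⟩ := hRepArg hnfv2 hr2ty
      exact ⟨r₂, u', by rw [subAt_app1, subAt_nil], hnf, hcase⟩
    have hmax : ∀ q, MaxPos (Tm.app (Tm.app (Tm.fvar Y ty2) r₁) r₂) q ↔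
        (q = [0, 1] ∨ q = [1]) := by
      intro q
      constructor
      · rintro ⟨hrep, hmaxp⟩
        rcases q with _ | ⟨a, q⟩
        · exact absurd hrep hnotRep_nil
        rcases a with _ | a
        · rcases q with _ | ⟨b, q⟩
          · exact absurd hrep hnotRep_0
          rcases b with _ | b
          · rcases q with _ | ⟨c, q⟩
            · exact absurd hrep hnotRep_00
            · exact absurd hrep (repPos_of_none
                (by rw [subAt_app0, subAt_app0, subAt_fvar_cons]))
          rcases b with _ | b
          · rcases q with _ | ⟨c, q⟩
            · exact Or.inl rfl
            · exact absurd hRep01 (hmaxp [0, 1] ⟨c :: q, rfl⟩ (by simp))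
          · exact absurd hrep (repPos_of_none (by rw [subAt_app0, subAt_app_ge2]))
        rcases a with _ | a
        · rcases q with _ | ⟨b, q⟩
          · exact Or.inr rfl
          · exact absurd hRep1 (hmaxp [1] ⟨b :: q, rfl⟩ (by simp))
        · exact absurd hrep (repPos_of_none (subAt_app_ge2 _ _ _ _))
      · rintro (rfl | rfl)
        · refine ⟨hRep01, fun p hp hne => ?_⟩
          rcases prefix_of_pair hp with rfl | rfl | rfl
          · exact hnotRep_nil
          · exact hnotRep_0
          · exact absurd rfl hne
        · refine ⟨hRep1, fun p hp hne => ?_⟩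
          rcases prefix_of_single hp with rfl | rfl
          · exact hnotRep_nil
          · exact absurd rfl hne
    have hne01 : ([0, 1] : List ℕ) ≠ [1] := by simp
    have hqs2 := nodup_all_eq_pair hqnd hne01
      ((hiff _).mpr ((hmax _).mpr (Or.inl rfl)))
      ((hiff _).mpr ((hmax _).mpr (Or.inr rfl)))
      (fun x hx => (hmax x).mp ((hiff x).mp hx))
    obtain ⟨nA, nB, hnames⟩ : ∃ nA nB, names = [nA, nB] := by
      have hlen2 : names.length = 2 := by rcases hqs2 with h | h <;> rw [h] at hlen <;> simpa using hlen
      cases names with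
      | nil => simp at hlen2
      | cons a t =>
        cases t with
        | nil => simp at hlen2
        | cons b t' =>
          cases t' with
          | nil => exact ⟨a, b, rfl⟩
          | cons c t'' => simp at hlen2
    subst hnames
    have hnAB : nA ≠ nB := by simpa using (List.nodup_cons.mp hnnd).1
    -- Y is smaller than the freshness bound
    have hYB : Y < fvBound (pseudoPat z Y [] [] r₁ r₂) := by
      have hfv : fvBound (pseudoPat z Y [] [] r₁ r₂) =
          max 0 (max (max (Y + 1) (fvBound r₁)) (fvBound r₂)) := by
        show fvBound (Tm.lam Ty.base (Tm.lam Ty.base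
          (Tm.app fC (pseudoArg z Y [] [] r₁ r₂)))) = _
        rw [hReq]
        rfl
      rw [hfv]
      exact lt_of_lt_of_le (Nat.lt_succ_self Y)
        (le_trans (le_trans (le_max_left _ _) (le_max_left _ _)) (le_max_right _ _))
    have hYnA : Y ≠ nA := by
      intro h
      have := hge nA (by simp)
      omega
    have hYnB : Y ≠ nB := by
      intro h
      have := hge nB (by simp)
      omega
    -- compute the lifting replacements
    have hL01 : ∀ n, liftReplacement (Tm.app (Tm.app (Tm.fvar Y ty2) r₁) r₂) [0, 1] n =
        Tm.app (Tm.app (Tm.fvar n ty2) (Tm.bvar 1)) (Tm.bvar 0) := by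
      intro n
      unfold liftReplacement
      rw [show subAt (Tm.app (Tm.app (Tm.fvar Y ty2) r₁) r₂) [0, 1] = some r₁ from
        by rw [subAt_app0, subAt_app1, subAt_nil]]
      simp only [Option.getD_some]
      rw [hity1]
      rfl
    have hL1 : ∀ n, liftReplacement (Tm.app (Tm.app (Tm.fvar Y ty2) r₁) r₂) [1] n =
        Tm.app (Tm.app (Tm.fvar n ty2) (Tm.bvar 1)) (Tm.bvar 0) := by
      intro n
      unfold liftReplacement
      rw [show subAt (Tm.app (Tm.app (Tm.fvar Y ty2) r₁) r₂) [1] = some r₂ from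
        by rw [subAt_app1, subAt_nil]]
      simp only [Option.getD_some]
      rw [hity2]
      rfl
    obtain ⟨u, v, huv, hYu, hYv, hr'eq⟩ :
        ∃ u v : ℕ, u ≠ v ∧ Y ≠ u ∧ Y ≠ v ∧
          r' = Tm.app (Tm.app (Tm.fvar Y ty2)
                (Tm.app (Tm.app (Tm.fvar u ty2) (Tm.bvar 1)) (Tm.bvar 0)))
              (Tm.app (Tm.app (Tm.fvar v ty2) (Tm.bvar 1)) (Tm.bvar 0)) := by
      rcases hqs2 with h2 | h2 <;> rw [h2] at hr' <;>
        simp only [List.zip, List.zipWith, List.foldl] at hr'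
      · refine ⟨nA, nB, hnAB, hYnA, hYnB, ?_⟩
        rw [hr', hL01, hL1]
        simp only [replaceAt_app0, replaceAt_app1, replaceAt_nil]
      · refine ⟨nB, nA, fun h => hnAB h.symm, hYnB, hYnA, ?_⟩
        rw [hr', hL01, hL1]
        simp only [replaceAt_app0, replaceAt_app1, replaceAt_nil]
    -- the witnessing substitution
    have hwt1 : HasType [] (Tm.lam Ty.base (Tm.lam Ty.base r₁)) ty2 :=
      HasType.lam (HasType.lam (hasType_closed_weaken hr1ty _))
    have hwt2 : HasType [] (Tm.lam Ty.base (Tm.lam Ty.base r₂)) ty2 :=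
      HasType.lam (HasType.lam (hasType_closed_weaken hr2ty _))
    refine ⟨(single u ty2 (Tm.lam Ty.base (Tm.lam Ty.base r₁)) hwt1).update v ty2
      (Tm.lam Ty.base (Tm.lam Ty.base r₂)) hwt2, ?_⟩
    have m1 : ((single u ty2 (Tm.lam Ty.base (Tm.lam Ty.base r₁)) hwt1).update v ty2
        (Tm.lam Ty.base (Tm.lam Ty.base r₂)) hwt2).map Y ty2 = Tm.fvar Y ty2 := by
      simp [Subst.update, single, idSubst, hYu, hYv]
    have m2 : ((single u ty2 (Tm.lam Ty.base (Tm.lam Ty.base r₁)) hwt1).update v ty2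
        (Tm.lam Ty.base (Tm.lam Ty.base r₂)) hwt2).map u ty2 =
        Tm.lam Ty.base (Tm.lam Ty.base r₁) := by
      simp [Subst.update, single, idSubst, huv]
    have m3 : ((single u ty2 (Tm.lam Ty.base (Tm.lam Ty.base r₁)) hwt1).update v ty2
        (Tm.lam Ty.base (Tm.lam Ty.base r₂)) hwt2).map v ty2 =
        Tm.lam Ty.base (Tm.lam Ty.base r₂) := by
      simp [Subst.update]
    show AbeEq (applyMap _ (Tm.lam Ty.base (Tm.lam Ty.base (Tm.app fC r'))))
      (pseudoPat z Y [] [] r₁ r₂)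
    rw [show pseudoPat z Y [] [] r₁ r₂ = Tm.lam Ty.base (Tm.lam Ty.base
      (Tm.app fC (pseudoArg z Y [] [] r₁ r₂))) from rfl, hReq, hr'eq]
    simp only [applyMap]
    rw [m1, m2, m3]
    have sc1 : Scoped 2 r₁ := scoped_mono r₁ (Nat.zero_le 2) (hasType_scoped hr1ty)
    have sc2 : Scoped 2 r₂ := scoped_mono r₂ (Nat.zero_le 2) (hasType_scoped hr2ty)
    exact AbeEq.lam (AbeEq.lam (AbeEq.app (AbeEq.refl fC)
      (AbeEq.app (AbeEq.app (AbeEq.refl _) (abeEq_app2 sc1)) (abeEq_app2 sc2))))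


end AU
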